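/- Descartes-type bound parity argument: for a real polynomial f, the number of positive real roots counted with multiplicity has the same parity as the number of sign changes in its coefficient sequence. In particular, if the number of sign changes is odd, f has at least one positive real root. -/

import Mathlib

open Polynomial in
/-- The number of sign changes in the coefficient sequence of a real
polynomial (consecutive nonzero coefficients of opposite signs). -/
noncomputable def signChanges (f : Polynomial ℝ) : ℕ :=
  let l := ((List.range (f.natDegree + 1)).map f.coeff).filter (fun c => c ≠ 0)
  ((l.zip l.tail).filter (fun p => p.1 * p.2 < 0)).length

/-!
Along the list of nonzero coefficients every sign change flips the sign relative to the first
entry, so the number of sign changes is odd exactly when the lowest and the highest nonzero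
coefficients have opposite signs. Writing `f = X ^ m * g` with `m` the trailing degree, `g 0` is
the lowest nonzero coefficient of `f` and `g` has the leading coefficient of `f`, so `g` changes
sign on `[0, ∞)`; the intermediate value theorem gives a positive root of `g`, hence of `f`.
-/

section SignChanges

variable {R : Type*} [CommRing R] [LinearOrder R] [IsStrictOrderedRing R]

theorem mul_neg_iff_of_mul_neg {a b c : R} (hab : a * b < 0) : a * c < 0 ↔ 0 < b * c := by
  have hb : 0 < b * b := mul_self_pos.2 (by rintro rfl; simp at hab)
  have key : a * c * (b * b) = a * b * (b * c) := by ring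
  constructor
  · intro h
    exact pos_of_mul_neg_right (key ▸ mul_neg_of_neg_of_pos h hb) hab.le
  · intro h
    exact neg_of_mul_neg_left (key ▸ mul_neg_of_neg_of_pos hab h) hb.le

theorem mul_neg_iff_of_mul_pos {a b c : R} (hab : 0 < a * b) : a * c < 0 ↔ b * c < 0 := by
  have hb : 0 < b * b := mul_self_pos.2 (by rintro rfl; simp at hab)
  have key : a * c * (b * b) = a * b * (b * c) := by ring
  constructor
  · intro h
    exact neg_of_mul_neg_right (key ▸ mul_neg_of_neg_of_pos h hb) hab.le
  · intro h
    exact neg_of_mul_neg_left (key ▸ mul_neg_of_pos_of_neg hab h) hb.le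

theorem odd_length_filter_mul_neg_zip_iff {a : R} {l : List R} (ha : a ≠ 0)
    (hl : ∀ x ∈ l, x ≠ 0) :
    Odd ((((a :: l).zip l).filter fun p => p.1 * p.2 < 0).length) ↔
      a * (a :: l).getLast (List.cons_ne_nil a l) < 0 := by
  induction l generalizing a with
  | nil => simp [mul_self_nonneg]
  | cons b t ih =>
    have hb : b ≠ 0 := hl b List.mem_cons_self
    have hbL : b * (b :: t).getLast (List.cons_ne_nil b t) ≠ 0 :=
      mul_ne_zero hb (hl _ (List.getLast_mem _))
    have ih := ih hb fun x hx => hl x (List.mem_cons_of_mem b hx)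
    rw [List.getLast_cons (List.cons_ne_nil b t), List.zip_cons_cons, List.filter_cons]
    by_cases hab : a * b < 0
    · rw [if_pos (decide_eq_true hab), List.length_cons, Nat.odd_add_one, ih,
        mul_neg_iff_of_mul_neg hab, not_lt, hbL.symm.le_iff_lt]
    · rw [if_neg (by simpa using hab), ih,
        mul_neg_iff_of_mul_pos ((not_lt.1 hab).lt_of_ne' (mul_ne_zero ha hb))]

end SignChanges

open Polynomial Filter

section NonzeroCoeffs

variable {R : Type*} [Semiring R] [DecidableEq R]

noncomputable def nonzeroCoeffs (f : R[X]) : List R :=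
  ((List.range (f.natDegree + 1)).map f.coeff).filter (fun c => c ≠ 0)

theorem ne_zero_of_mem_nonzeroCoeffs {f : R[X]} {c : R} (hc : c ∈ nonzeroCoeffs f) : c ≠ 0 := by
  simpa using (List.mem_filter.1 hc).2

theorem head?_nonzeroCoeffs {f : R[X]} (hf : f ≠ 0) :
    (nonzeroCoeffs f).head? = some f.trailingCoeff := by
  rw [nonzeroCoeffs, List.head?_filter, List.find?_map, List.find?_range_eq_some.2]
  · rfl
  refine ⟨?_, List.mem_range.2 (Nat.lt_succ_of_le f.natTrailingDegree_le_natDegree),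
    fun j hj => ?_⟩
  · simpa using trailingCoeff_nonzero_iff_nonzero.2 hf
  · simpa using coeff_eq_zero_of_lt_natTrailingDegree hj

theorem getLast?_nonzeroCoeffs {f : R[X]} (hf : f ≠ 0) :
    (nonzeroCoeffs f).getLast? = some f.leadingCoeff := by
  rw [nonzeroCoeffs, List.getLast?_filter, List.range_succ, List.map_append, List.reverse_append,
    List.map_singleton, List.reverse_singleton, List.singleton_append,
    List.find?_cons_of_pos (by simpa using leadingCoeff_ne_zero.2 hf)]
  rfl

end NonzeroCoeffs

theorem odd_signChanges_iff {f : ℝ[X]} (hf : f ≠ 0) :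
    Odd (signChanges f) ↔ f.trailingCoeff * f.leadingCoeff < 0 := by
  obtain ⟨t, ht⟩ := List.head?_eq_some_iff.1 (head?_nonzeroCoeffs hf)
  have hlast := getLast?_nonzeroCoeffs hf
  rw [ht, List.getLast?_eq_some_getLast (List.cons_ne_nil _ _), Option.some_inj] at hlast
  change Odd (((nonzeroCoeffs f).zip (nonzeroCoeffs f).tail).filter _).length ↔ _
  rw [ht, List.tail_cons, odd_length_filter_mul_neg_zip_iff, hlast]
  · exact ne_zero_of_mem_nonzeroCoeffs (ht ▸ List.mem_cons_self)
  · exact fun c hc => ne_zero_of_mem_nonzeroCoeffs (ht ▸ List.mem_cons_of_mem _ hc)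

theorem exists_pos_root_of_eval_zero_mul_leadingCoeff_neg {g : ℝ[X]}
    (h : g.eval 0 * g.leadingCoeff < 0) : ∃ x, 0 < x ∧ g.eval x = 0 := by
  wlog h0 : g.eval 0 < 0 generalizing g
  · have h0' : 0 < g.eval 0 := (not_lt.1 h0).lt_of_ne' (left_ne_zero_of_mul h.ne)
    obtain ⟨x, hx, hgx⟩ := this (g := -g) (by simpa using h) (by simpa using h0')
    exact ⟨x, hx, by simpa using hgx⟩
  have hl : 0 < g.leadingCoeff := pos_of_mul_neg_right h h0.le
  have hdeg : 0 < g.degree := by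
    by_contra! hd
    rw [eq_C_of_degree_le_zero hd] at h
    exact (mul_self_nonneg _).not_gt (by simpa using h)
  obtain ⟨b, hb, hb0⟩ :=
    ((g.tendsto_atTop_of_leadingCoeff_nonneg hdeg hl.le).eventually_gt_atTop 0
      |>.and (eventually_ge_atTop 0)).exists
  obtain ⟨x, ⟨hx, -⟩, hgx⟩ :=
    intermediate_value_Ioo hb0 g.continuous.continuousOn ⟨h0, hb⟩
  exact ⟨x, hx, hgx⟩

theorem exists_pos_root_of_trailingCoeff_mul_leadingCoeff_neg {f : ℝ[X]}
    (h : f.trailingCoeff * f.leadingCoeff < 0) : ∃ x, 0 < x ∧ f.eval x = 0 := by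
  set m := f.natTrailingDegree
  obtain ⟨g, hg⟩ : X ^ m ∣ f :=
    X_pow_dvd_iff.2 fun d hd => coeff_eq_zero_of_lt_natTrailingDegree hd
  have hg0 : g.eval 0 = f.trailingCoeff := by
    rw [← coeff_zero_eq_eval_zero, ← coeff_X_pow_mul g m 0, zero_add, ← hg]; rfl
  have hgl : g.leadingCoeff = f.leadingCoeff := by
    rw [hg, leadingCoeff_mul, leadingCoeff_X_pow, one_mul]
  obtain ⟨x, hx, hgx⟩ := exists_pos_root_of_eval_zero_mul_leadingCoeff_neg (hg0 ▸ hgl ▸ h)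
  exact ⟨x, hx, by rw [hg, eval_mul, hgx, mul_zero]⟩

theorem stmt_19 (f : Polynomial ℝ) (hf : f ≠ 0) (hodd : Odd (signChanges f)) :
    ∃ x : ℝ, 0 < x ∧ f.eval x = 0 :=
  exists_pos_root_of_trailingCoeff_mul_leadingCoeff_neg ((odd_signChanges_iff hf).1 hodd)
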